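/- arXiv:2605.10580 — 5 statements merged into one kernel-verified Lean document; each statement's English description precedes it below -/
import Mathlib

section
/- Let D be a finite poset (viewed as a category) and I : D → Top a functor such that: (i) for every object x, I(x) is a T1 normal topological space; (ii) for every morphism f of D, the continuous map I(f) is injective and closed; (iii) whenever f₁ : x₁ → y and f₂ : x₂ → y are morphisms of D with I(f₁)(I(x₁)) ∩ I(f₂)(I(x₂)) ≠ ∅, there exist finitely many objects w¹,…,wⁿ of D and morphisms g₁ʲ : wʲ → x₁, g₂ʲ : wʲ → x₂ with f₁∘g₁ʲ = f₂∘g₂ʲ for all j and I(f₁)(I(x₁)) ∩ I(f₂)(I(x₂)) = ⋃ⱼ I(f₁∘g₁ʲ)(I(wʲ)). Then the colimit colim_D I is a T1 normal topological space. -/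
/-!
The colimit is the union of the images of the `I x`. Injectivity together with condition (iii)
makes "having a common preimage in some `I w`" a transitive relation, so it is exactly the
equivalence relation defining the colimit. Consequently the preimage in `I y` of the image of a
closed subset of `I x` is a finite union of closed sets, and the structure maps are closed
embeddings: the colimit is covered by finitely many closed T1 normal subspaces.
Normality glues along such covers when phrased as the Tietze extension property: a function
continuous on a closed subset of `A ∪ B` is extended first over `B`, then over `A`.
-/

open CategoryTheory Limits Topology Set

universe u v

section ClosedCover

variable {X : Type u} [TopologicalSpace X] (Y : Type v) [TopologicalSpace Y]

def HasExtensionsOn (S : Set X) : Prop :=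
  ∀ C ⊆ S, IsClosed C → ∀ f : X → Y, ContinuousOn f C →
    ∃ g : X → Y, ContinuousOn g S ∧ EqOn g f C

variable {Y}

theorem hasExtensionsOn_of_normalSpace [TietzeExtension.{u} Y] {S : Set X} [NormalSpace S] :
    HasExtensionsOn Y S := by
  classical
  intro C hCS hC f hf
  let C' : Set S := Subtype.val ⁻¹' C
  let f' : C(C', Y) := ⟨fun p => f p.1.1,
    hf.comp_continuous (continuous_subtype_val.comp continuous_subtype_val) fun p => p.2⟩
  obtain ⟨G, hG⟩ := f'.exists_restrict_eq (hC.preimage continuous_subtype_val)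
  refine ⟨fun p => if h : p ∈ S then G ⟨p, h⟩ else f p, ?_, fun p hp => ?_⟩
  · rw [continuousOn_iff_continuous_domRestrict]
    convert G.continuous using 1
    exact funext fun p => dif_pos p.2
  · exact (dif_pos (hCS hp)).trans (DFunLike.congr_fun hG ⟨⟨p, hCS hp⟩, hp⟩)

theorem HasExtensionsOn.union {A B : Set X} (hA : HasExtensionsOn Y A) (hB : HasExtensionsOn Y B)
    (hAc : IsClosed A) (hBc : IsClosed B) : HasExtensionsOn Y (A ∪ B) := by
  classical
  intro C _ hC f hf
  obtain ⟨gB, hgB, hgBf⟩ :=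
    hB (C ∩ B) inter_subset_right (hC.inter hBc) f (hf.mono inter_subset_left)
  have hgB_C : EqOn (C.piecewise f gB) gB B := fun p hp => by
    by_cases hpC : p ∈ C
    · simp [hpC, hgBf ⟨hpC, hp⟩]
    · simp [hpC]
  have hfgB : ContinuousOn (C.piecewise f gB) (C ∪ B) :=
    (hf.congr (piecewise_eqOn C f gB)).union_of_isClosed (hgB.congr hgB_C) hC hBc
  obtain ⟨gA, hgA, hgAf⟩ := hA ((C ∪ B) ∩ A) inter_subset_right ((hC.union hBc).inter hAc)
    _ (hfgB.mono inter_subset_left)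
  refine ⟨A.piecewise gA (C.piecewise f gB), ?_, fun p hp => ?_⟩
  · refine (hgA.congr (piecewise_eqOn A _ _)).union_of_isClosed
      ((hfgB.mono subset_union_right).congr fun p hp => ?_) hAc hBc
    by_cases hpA : p ∈ A
    · simp [hpA, hgAf ⟨Or.inr hp, hpA⟩]
    · simp [hpA]
  · by_cases hpA : p ∈ A
    · simp [hpA, hgAf ⟨Or.inl hp, hpA⟩, hp]
    · simp [hpA, hp]

theorem hasExtensionsOn_biUnion {ι : Type*} (s : Finset ι) {A : ι → Set X}
    (hAc : ∀ i, IsClosed (A i)) (hA : ∀ i, HasExtensionsOn Y (A i)) :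
    HasExtensionsOn Y (⋃ i ∈ s, A i) := by
  classical
  induction s using Finset.induction_on with
  | empty =>
    intro C _ _ f _
    exact ⟨f, by simp, eqOn_refl f C⟩
  | insert i s _ ih =>
    rw [Finset.set_biUnion_insert]
    exact (hA i).union ih (hAc i) (isClosed_biUnion_finset fun j _ => hAc j)

theorem normalSpace_of_hasExtensionsOn_univ (h : HasExtensionsOn ℝ (univ : Set X)) :
    NormalSpace X := by
  refine ⟨fun E F hE hF hEF => ?_⟩
  have hind : ContinuousOn (F.indicator 1) (E ∪ F) :=
    (continuousOn_const (c := (0 : ℝ)).congr fun p hp =>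
        indicator_of_notMem (hEF.notMem_of_mem_left hp) _).union_of_isClosed
      (continuousOn_const (c := (1 : ℝ)).congr fun p hp => indicator_of_mem hp _) hE hF
  obtain ⟨g, hg, hgF⟩ := h (E ∪ F) (subset_univ _) (hE.union hF) _ hind
  have h01 : SeparatedNhds ({0} : Set ℝ) {1} :=
    .of_finite (finite_singleton _) (finite_singleton _) (disjoint_singleton.2 zero_ne_one)
  refine (h01.preimage (continuousOn_univ.1 hg)).mono (fun p hp => ?_) (fun p hp => ?_)
  · simp [hgF (Or.inl hp), indicator_of_notMem (hEF.notMem_of_mem_left hp)]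
  · simp [hgF (Or.inr hp), indicator_of_mem hp]

theorem normalSpace_of_isClosed_cover {ι : Type*} [Finite ι] {A : ι → Set X}
    (hAc : ∀ i, IsClosed (A i)) [∀ i, NormalSpace (A i)] (hcover : ⋃ i, A i = univ) :
    NormalSpace X := by
  have := Fintype.ofFinite ι
  apply normalSpace_of_hasExtensionsOn_univ
  have := hasExtensionsOn_biUnion Finset.univ hAc fun _ => hasExtensionsOn_of_normalSpace (Y := ℝ)
  simpa [hcover] using this

end ClosedCover

section Colimit

variable {J : Type u} [SmallCategory J] (F : J ⥤ TopCat.{u})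

def HasCommonPreimages : Prop :=
  ∀ ⦃x₁ x₂ y : J⦄ (f₁ : x₁ ⟶ y) (f₂ : x₂ ⟶ y) (a₁ : F.obj x₁) (a₂ : F.obj x₂),
    F.map f₁ a₁ = F.map f₂ a₂ →
      ∃ (w : J) (g₁ : w ⟶ x₁) (g₂ : w ⟶ x₂) (c : F.obj w), F.map g₁ c = a₁ ∧ F.map g₂ c = a₂

def CommonPreimageRel (p q : Σ j, (F ⋙ forget TopCat).obj j) : Prop :=
  ∃ (w : J) (f : w ⟶ p.1) (g : w ⟶ q.1) (c : F.obj w), F.map f c = p.2 ∧ F.map g c = q.2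

variable {F}

theorem hasCommonPreimages_of_inter_range_eq_iUnion
    (hinj : ∀ {x y : J} (f : x ⟶ y), Function.Injective (F.map f))
    (h : ∀ {x₁ x₂ y : J} (f₁ : x₁ ⟶ y) (f₂ : x₂ ⟶ y),
      (Set.range (F.map f₁) ∩ Set.range (F.map f₂)).Nonempty →
      ∃ (n : ℕ) (w : Fin n → J) (g₁ : ∀ j, w j ⟶ x₁) (g₂ : ∀ j, w j ⟶ x₂),
        (∀ j, g₁ j ≫ f₁ = g₂ j ≫ f₂) ∧
        Set.range (F.map f₁) ∩ Set.range (F.map f₂)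
          = ⋃ j, Set.range (F.map (g₁ j ≫ f₁))) :
    HasCommonPreimages F := by
  intro x₁ x₂ y f₁ f₂ a₁ a₂ ha
  have hmem : F.map f₁ a₁ ∈ Set.range (F.map f₁) ∩ Set.range (F.map f₂) :=
    ⟨⟨a₁, rfl⟩, a₂, ha.symm⟩
  obtain ⟨n, w, g₁, g₂, hcomm, heq⟩ := h f₁ f₂ ⟨_, hmem⟩
  rw [heq] at hmem
  obtain ⟨j, c, hc⟩ := mem_iUnion.1 hmem
  refine ⟨w j, g₁ j, g₂ j, c, hinj f₁ ?_, hinj f₂ ?_⟩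
  · simpa using hc
  · rw [← ha, ← hc, ← ConcreteCategory.comp_apply, ← Functor.map_comp, hcomm j,
      Functor.map_comp, ConcreteCategory.comp_apply]

theorem commonPreimageRel_equivalence (hF : HasCommonPreimages F) :
    Equivalence (CommonPreimageRel F) where
  refl p := ⟨p.1, 𝟙 _, 𝟙 _, p.2, by simp, by simp⟩
  symm := fun ⟨w, f, g, c, hf, hg⟩ => ⟨w, g, f, c, hg, hf⟩
  trans := by
    rintro p q r ⟨w₁, f₁, g₁, c₁, hf₁, hg₁⟩ ⟨w₂, f₂, g₂, c₂, hf₂, hg₂⟩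
    obtain ⟨w, h₁, h₂, c, hc₁, hc₂⟩ := hF g₁ f₂ c₁ c₂ (hg₁.trans hf₂.symm)
    exact ⟨w, h₁ ≫ f₁, h₂ ≫ g₂, c, by simp [hc₁, hf₁], by simp [hc₂, hg₂]⟩

theorem colimit_ι_eq_iff (hF : HasCommonPreimages F) {x y : J} (a : F.obj x) (b : F.obj y) :
    colimit.ι F x a = colimit.ι F y b ↔
      ∃ (w : J) (f : w ⟶ x) (g : w ⟶ y) (c : F.obj w), F.map f c = a ∧ F.map g c = b := by
  refine ⟨fun h => ?_, fun ⟨w, f, g, c, hf, hg⟩ => by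
    rw [← hf, ← hg, colimit.w_apply, colimit.w_apply]⟩
  have hType : colimit.ι (F ⋙ forget TopCat) x a = colimit.ι (F ⋙ forget TopCat) y b := by
    have hx := ConcreteCategory.congr_hom (ι_preservesColimitIso_hom (forget TopCat) F x) a
    have hy := ConcreteCategory.congr_hom (ι_preservesColimitIso_hom (forget TopCat) F y) b
    rw [types_comp_apply] at hx hy
    rw [← hx, ← hy]
    exact congrArg _ h
  exact (commonPreimageRel_equivalence hF).eqvGen_iff.1
    ((Types.colimit_eq hType).mono fun p q ⟨f, hf⟩ => ⟨p.1, 𝟙 _, f, p.2, by simp, hf.symm⟩)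

theorem preimage_colimit_ι_image (hF : HasCommonPreimages F) {x : J} (C : Set (F.obj x))
    (y : J) :
    colimit.ι F y ⁻¹' (colimit.ι F x '' C) =
      ⋃ (w : J) (f : w ⟶ x) (g : w ⟶ y), F.map g '' (F.map f ⁻¹' C) := by
  ext b
  simp only [mem_preimage, mem_image, mem_iUnion]
  constructor
  · rintro ⟨a, ha, hab⟩
    obtain ⟨w, f, g, c, rfl, rfl⟩ := (colimit_ι_eq_iff hF a b).1 hab
    exact ⟨w, f, g, c, ha, rfl⟩
  · rintro ⟨w, f, g, c, hc, rfl⟩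
    exact ⟨_, hc, (colimit_ι_eq_iff hF _ _).2 ⟨w, f, g, c, rfl, rfl⟩⟩

theorem colimit_ι_injective [Quiver.IsThin J] (hF : HasCommonPreimages F) (x : J) :
    Function.Injective (colimit.ι F x) := fun a a' h => by
  obtain ⟨w, f, g, c, rfl, rfl⟩ := (colimit_ι_eq_iff hF a a').1 h
  rw [Subsingleton.elim f g]

theorem colimit_ι_isClosedMap [Finite J] [∀ x y : J, Finite (x ⟶ y)]
    (hclosed : ∀ {x y : J} (f : x ⟶ y), IsClosedMap (F.map f))
    (hF : HasCommonPreimages F) (x : J) : IsClosedMap (colimit.ι F x) := by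
  intro C hC
  rw [TopCat.isClosed_iff_of_isColimit _ (colimit.isColimit F)]
  intro y
  rw [colimit.cocone_ι, preimage_colimit_ι_image hF]
  exact isClosed_iUnion_of_finite fun w => isClosed_iUnion_of_finite fun f =>
    isClosed_iUnion_of_finite fun g => hclosed g _ (hC.preimage (F.map f).hom.continuous)

theorem colimit_t1Space [Finite J] [∀ x y : J, Finite (x ⟶ y)] [∀ x, T1Space (F.obj x)]
    (hclosed : ∀ {x y : J} (f : x ⟶ y), IsClosedMap (F.map f)) (hF : HasCommonPreimages F) :
    T1Space (colimit F : TopCat.{u}) := by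
  refine ⟨fun p => ?_⟩
  obtain ⟨x, a, rfl⟩ := Concrete.colimit_exists_rep F p
  simpa using colimit_ι_isClosedMap hclosed hF x _ (isClosed_singleton (x := a))

theorem colimit_normalSpace [Finite J] [Quiver.IsThin J] [∀ x, NormalSpace (F.obj x)]
    (hclosed : ∀ {x y : J} (f : x ⟶ y), IsClosedMap (F.map f)) (hF : HasCommonPreimages F) :
    NormalSpace (colimit F : TopCat.{u}) := by
  have hι (x : J) : IsClosedEmbedding (colimit.ι F x) :=
    .of_continuous_injective_isClosedMap (colimit.ι F x).hom.continuous
      (colimit_ι_injective hF x) (colimit_ι_isClosedMap hclosed hF x)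
  have (x : J) : NormalSpace (range (colimit.ι F x)) :=
    (hι x).toIsEmbedding.toHomeomorph.normalSpace
  refine normalSpace_of_isClosed_cover (fun x => (hι x).isClosed_range) ?_
  exact iUnion_eq_univ_iff.2 fun p =>
    (Concrete.colimit_exists_rep F p).imp fun _ ⟨a, ha⟩ => ⟨a, ha⟩

end Colimit

/-- Let `D` be a finite poset (viewed as a category) and `I : D ⥤ Top` a functor
such that each `I(x)` is T1 and normal, each `I(f)` is injective and closed, and intersections
of images are finite unions of images from common lower bounds.  Then the colimit `colim_D I`
is a T1 normal topological space. -/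
theorem colimit_t1_normal {D : Type} [PartialOrder D] [Fintype D]
    (I : D ⥤ TopCat.{0})
    (h1 : ∀ x : D, T1Space (I.obj x) ∧ NormalSpace (I.obj x))
    (h2 : ∀ {x y : D} (f : x ⟶ y), Function.Injective (I.map f) ∧ IsClosedMap (I.map f))
    (h3 : ∀ {x₁ x₂ y : D} (f₁ : x₁ ⟶ y) (f₂ : x₂ ⟶ y),
      (Set.range (I.map f₁) ∩ Set.range (I.map f₂)).Nonempty →
      ∃ (n : ℕ) (w : Fin n → D) (g₁ : ∀ j, w j ⟶ x₁) (g₂ : ∀ j, w j ⟶ x₂),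
        (∀ j, g₁ j ≫ f₁ = g₂ j ≫ f₂) ∧
        Set.range (I.map f₁) ∩ Set.range (I.map f₂)
          = ⋃ j, Set.range (I.map (g₁ j ≫ f₁))) :
    T1Space (colimit I : TopCat.{0}) ∧ NormalSpace (colimit I : TopCat.{0}) := by
  have (x : D) : T1Space (I.obj x) := (h1 x).1
  have (x : D) : NormalSpace (I.obj x) := (h1 x).2
  have hI : HasCommonPreimages I :=
    hasCommonPreimages_of_inter_range_eq_iUnion (fun f => (h2 f).1) h3
  exact ⟨colimit_t1Space (fun f => (h2 f).2) hI, colimit_normalSpace (fun f => (h2 f).2) hI⟩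
end

section
/- Let D be a finite poset (viewed as a category) and I : D → Top a functor such that: (i) for every object x, I(x) is a T1 normal topological space; (ii) for every morphism f of D, the continuous map I(f) is injective and closed; (iii) whenever f₁ : x₁ → y and f₂ : x₂ → y are morphisms of D with I(f₁)(I(x₁)) ∩ I(f₂)(I(x₂)) ≠ ∅, there exist finitely many objects w¹,…,wⁿ of D and morphisms g₁ʲ : wʲ → x₁, g₂ʲ : wʲ → x₂ with f₁∘g₁ʲ = f₂∘g₂ʲ for all j and I(f₁)(I(x₁)) ∩ I(f₂)(I(x₂)) = ⋃ⱼ I(f₁∘g₁ʲ)(I(wʲ)). Then for every object x of D, the canonical map I(x) → colim_D I is injective and closed. -/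
/-!
Call two points of `⨆ₓ I(x)` joined below if both are images of a single point of some
`I(w)`. This relation contains the generating relation of the colimit, and it is transitive:
if two spans meet at a point of `I(y)`, then (iii) provides a point of some `I(v)` mapping to
that point through both, and injectivity of the maps pulls it back to the two feet of the
spans. Hence two points have the same image in the colimit iff they are joined below. Over a
poset the two legs of a span into the same `I(x)` coincide, which gives injectivity; and the
preimage in `I(z)` of the image of a closed `C ⊆ I(y)` is the finite union of the closed sets
`I(w ≤ z)(I(w ≤ y)⁻¹ C)` over `w ≤ y, z`.
-/

open CategoryTheory Limits

namespace CategoryTheory.Functor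

universe v u w

variable {J : Type u} [Category.{v} J] (F : J ⥤ Type w)

def JoinedBelow (a b : Σ j, F.obj j) : Prop :=
  ∃ (k : J) (g : k ⟶ a.1) (h : k ⟶ b.1) (r : F.obj k), F.map g r = a.2 ∧ F.map h r = b.2

def IsJoinedBelowOnCospans : Prop :=
  ∀ ⦃x₁ x₂ y : J⦄ (f₁ : x₁ ⟶ y) (f₂ : x₂ ⟶ y) (r₁ : F.obj x₁) (r₂ : F.obj x₂),
    F.map f₁ r₁ = F.map f₂ r₂ → F.JoinedBelow ⟨x₁, r₁⟩ ⟨x₂, r₂⟩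

variable {F}

lemma colimitTypeRel_le_joinedBelow : F.ColimitTypeRel ≤ F.JoinedBelow :=
  fun a _ ⟨f, hf⟩ => ⟨a.1, 𝟙 _, f, a.2, by simp, hf.symm⟩

section

variable (hF : F.IsJoinedBelowOnCospans)
include hF

lemma joinedBelow_equivalence : _root_.Equivalence F.JoinedBelow where
  refl a := ⟨a.1, 𝟙 _, 𝟙 _, a.2, by simp, by simp⟩
  symm := fun ⟨k, g, h, r, hg, hh⟩ => ⟨k, h, g, r, hh, hg⟩
  trans := by
    rintro a b c ⟨k, g, h, r, hg, hh⟩ ⟨k', g', h', r', hg', hh'⟩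
    obtain ⟨m, e, e', t, he, he'⟩ := hF h g' r r' (hh.trans hg'.symm)
    refine ⟨m, e ≫ g, e' ≫ h', t, ?_, ?_⟩
    · rw [F.map_comp, types_comp_apply, he, hg]
    · rw [F.map_comp, types_comp_apply, he', hh']

lemma joinedBelow_of_eqvGen_colimitTypeRel {a b : Σ j, F.obj j}
    (h : Relation.EqvGen F.ColimitTypeRel a b) : F.JoinedBelow a b :=
  (joinedBelow_equivalence hF).eqvGen_iff.mp
    (Relation.EqvGen.mono colimitTypeRel_le_joinedBelow _ _ h)

end

lemma isJoinedBelowOnCospans_of_injective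
    (hinj : ∀ ⦃x y : J⦄ (f : x ⟶ y), Function.Injective (F.map f))
    (hcover : ∀ {x₁ x₂ y : J} (f₁ : x₁ ⟶ y) (f₂ : x₂ ⟶ y),
      (Set.range (F.map f₁) ∩ Set.range (F.map f₂)).Nonempty →
      ∃ (n : ℕ) (w : Fin n → J) (g₁ : ∀ j, w j ⟶ x₁) (g₂ : ∀ j, w j ⟶ x₂),
        (∀ j, g₁ j ≫ f₁ = g₂ j ≫ f₂) ∧
        Set.range (F.map f₁) ∩ Set.range (F.map f₂) = ⋃ j, Set.range (F.map (g₁ j ≫ f₁))) :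
    F.IsJoinedBelowOnCospans := by
  intro x₁ x₂ y f₁ f₂ r₁ r₂ h
  have hmem : F.map f₁ r₁ ∈ Set.range (F.map f₁) ∩ Set.range (F.map f₂) :=
    ⟨⟨r₁, rfl⟩, ⟨r₂, h.symm⟩⟩
  obtain ⟨n, w, g₁, g₂, hcomm, hrange⟩ := hcover f₁ f₂ ⟨_, hmem⟩
  rw [hrange] at hmem
  obtain ⟨j, t, ht⟩ := Set.mem_iUnion.mp hmem
  refine ⟨w j, g₁ j, g₂ j, t, hinj f₁ ?_, hinj f₂ ?_⟩
  · rw [← ht, F.map_comp, types_comp_apply]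
  · change F.map f₂ (F.map (g₂ j) t) = F.map f₂ r₂
    rw [← h, ← ht, hcomm, F.map_comp, types_comp_apply]

end CategoryTheory.Functor

namespace TopCat

universe u

variable {J : Type u} [SmallCategory J] (I : J ⥤ TopCat.{u})

lemma eqvGen_colimitTypeRel_of_colimit_ι_eq {j j' : J} {x : I.obj j} {y : I.obj j'}
    (h : colimit.ι I j x = colimit.ι I j' y) :
    Relation.EqvGen (I ⋙ forget TopCat).ColimitTypeRel ⟨j, x⟩ ⟨j', y⟩ := by
  apply Types.colimit_eq
  rw [← ι_preservesColimitIso_hom (forget TopCat) I j,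
    ← ι_preservesColimitIso_hom (forget TopCat) I j']
  simp only [types_comp_apply]
  exact congrArg _ h

section Preorder

variable {D : Type u} [Preorder D] (I : D ⥤ TopCat.{u})
  (hI : (I ⋙ forget TopCat).IsJoinedBelowOnCospans)
include hI

lemma exists_le_le_of_colimit_ι_eq {y z : D} {p : I.obj y} {q : I.obj z}
    (h : colimit.ι I y p = colimit.ι I z q) :
    ∃ (w : D) (hy : w ≤ y) (hz : w ≤ z) (r : I.obj w),
      I.map (homOfLE hy) r = p ∧ I.map (homOfLE hz) r = q := by
  obtain ⟨w, g, g', r, hg, hg'⟩ :=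
    Functor.joinedBelow_of_eqvGen_colimitTypeRel hI (eqvGen_colimitTypeRel_of_colimit_ι_eq I h)
  exact ⟨w, leOfHom g, leOfHom g', r, hg, hg'⟩

lemma colimit_ι_injective (x : D) : Function.Injective (colimit.ι I x) := by
  intro p q h
  obtain ⟨w, hp, hq, r, rfl, rfl⟩ := exists_le_le_of_colimit_ι_eq I hI h
  rfl

lemma preimage_colimit_ι_image {y : D} (C : Set (I.obj y)) (z : D) :
    colimit.ι I z ⁻¹' (colimit.ι I y '' C) =
      ⋃ (w : D) (hy : w ≤ y) (hz : w ≤ z),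
        I.map (homOfLE hz) '' (I.map (homOfLE hy) ⁻¹' C) := by
  ext q
  simp only [Set.mem_preimage, Set.mem_image, Set.mem_iUnion]
  constructor
  · rintro ⟨p, hp, h⟩
    obtain ⟨w, hy, hz, r, rfl, rfl⟩ := exists_le_le_of_colimit_ι_eq I hI h
    exact ⟨w, hy, hz, r, hp, rfl⟩
  · rintro ⟨w, hy, hz, r, hr, rfl⟩
    exact ⟨_, hr, by rw [colimit.w_apply, colimit.w_apply]⟩

lemma colimit_ι_isClosedMap [Finite D]
    (hclosed : ∀ ⦃x y : D⦄ (f : x ⟶ y), IsClosedMap (I.map f)) (y : D) :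
    IsClosedMap (colimit.ι I y) := by
  intro C hC
  refine (isClosed_iff_of_isColimit _ (colimit.isColimit I) _).2 fun z => ?_
  change IsClosed (colimit.ι I z ⁻¹' _)
  rw [preimage_colimit_ι_image I hI]
  exact isClosed_iUnion_of_finite fun w => isClosed_iUnion_of_finite fun hy =>
    isClosed_iUnion_of_finite fun hz => hclosed _ _ (hC.preimage (I.map _).hom.continuous)

end Preorder

end TopCat

theorem colimit_ι_injective_closed_general {D : Type} [PartialOrder D] [Fintype D]
    (I : D ⥤ TopCat.{0})
    (h2 : ∀ {x y : D} (f : x ⟶ y), Function.Injective (I.map f) ∧ IsClosedMap (I.map f))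
    (h3 : ∀ {x₁ x₂ y : D} (f₁ : x₁ ⟶ y) (f₂ : x₂ ⟶ y),
      (Set.range (I.map f₁) ∩ Set.range (I.map f₂)).Nonempty →
      ∃ (n : ℕ) (w : Fin n → D) (g₁ : ∀ j, w j ⟶ x₁) (g₂ : ∀ j, w j ⟶ x₂),
        (∀ j, g₁ j ≫ f₁ = g₂ j ≫ f₂) ∧
        Set.range (I.map f₁) ∩ Set.range (I.map f₂)
          = ⋃ j, Set.range (I.map (g₁ j ≫ f₁))) :
    ∀ x : D, Function.Injective (colimit.ι I x : I.obj x ⟶ (colimit I : TopCat.{0})) ∧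
      IsClosedMap (colimit.ι I x : I.obj x ⟶ (colimit I : TopCat.{0})) := by
  have hI : (I ⋙ forget TopCat).IsJoinedBelowOnCospans :=
    Functor.isJoinedBelowOnCospans_of_injective (fun _ _ f => (h2 f).1) h3
  exact fun x => ⟨TopCat.colimit_ι_injective I hI x,
    TopCat.colimit_ι_isClosedMap I hI (fun _ _ f => (h2 f).2) x⟩

/-- under the hypotheses on the diagram `I`, for every object `x` the
canonical map `I(x) → colim_D I` is injective and closed. -/
theorem colimit_ι_injective_closed {D : Type} [PartialOrder D] [Fintype D]
    (I : D ⥤ TopCat.{0})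
    (h1 : ∀ x : D, T1Space (I.obj x) ∧ NormalSpace (I.obj x))
    (h2 : ∀ {x y : D} (f : x ⟶ y), Function.Injective (I.map f) ∧ IsClosedMap (I.map f))
    (h3 : ∀ {x₁ x₂ y : D} (f₁ : x₁ ⟶ y) (f₂ : x₂ ⟶ y),
      (Set.range (I.map f₁) ∩ Set.range (I.map f₂)).Nonempty →
      ∃ (n : ℕ) (w : Fin n → D) (g₁ : ∀ j, w j ⟶ x₁) (g₂ : ∀ j, w j ⟶ x₂),
        (∀ j, g₁ j ≫ f₁ = g₂ j ≫ f₂) ∧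
        Set.range (I.map f₁) ∩ Set.range (I.map f₂)
          = ⋃ j, Set.range (I.map (g₁ j ≫ f₁))) :
    ∀ x : D, Function.Injective (colimit.ι I x : I.obj x ⟶ (colimit I : TopCat.{0})) ∧
      IsClosedMap (colimit.ι I x : I.obj x ⟶ (colimit I : TopCat.{0})) :=
  colimit_ι_injective_closed_general I h2 h3
end

section
/- Let D be a finite poset (viewed as a category) and I : D → Top a functor such that: (i) for every object x, I(x) is a T1 normal topological space; (ii) for every morphism f of D, the continuous map I(f) is injective and closed; (iii) whenever f₁ : x₁ → y and f₂ : x₂ → y are morphisms of D with I(f₁)(I(x₁)) ∩ I(f₂)(I(x₂)) ≠ ∅, there exist finitely many objects w¹,…,wⁿ of D and morphisms g₁ʲ : wʲ → x₁, g₂ʲ : wʲ → x₂ with f₁∘g₁ʲ = f₂∘g₂ʲ for all j and I(f₁)(I(x₁)) ∩ I(f₂)(I(x₂)) = ⋃ⱼ I(f₁∘g₁ʲ)(I(wʲ)). Let f̂₁ : I(x₁) → colim_D I and f̂₂ : I(x₂) → colim_D I be the canonical maps and suppose f̂₁(I(x₁)) ∩ f̂₂(I(x₂)) ≠ ∅.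 If w¹,…,wⁿ are exactly those objects w of D admitting morphisms to both x₁ and x₂, and g₁ʲ : wʲ → x₁ denotes the (unique) morphism, then f̂₁(I(x₁)) ∩ f̂₂(I(x₂)) = ⋃ⱼ (f̂₁ ∘ I(g₁ʲ))(I(wʲ)). -/
/-!
A point in both images is represented in `I(x₁)` and `I(x₂)` by elements joined by a zigzag
in `⨆ I(x)`. Injectivity of the maps `I(f)` together with (iii) replaces two consecutive legs
of a zigzag by a single span, so the two elements have a common preimage in some `I(z)` with
`z ≤ x₁` and `z ≤ x₂`; such a `z` is one of the `wʲ`, and `z ⟶ x₁` is `g₁ʲ` since `D` is a poset.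
-/

open CategoryTheory Limits

universe u

namespace CategoryTheory.Functor

variable {C : Type*} [Category* C]

def LiftsCospanEqualities (F : C ⥤ Type*) : Prop :=
  ∀ ⦃x₁ x₂ y : C⦄ (f₁ : x₁ ⟶ y) (f₂ : x₂ ⟶ y) (a₁ : F.obj x₁) (a₂ : F.obj x₂),
    F.map f₁ a₁ = F.map f₂ a₂ →
      ∃ (z : C) (g₁ : z ⟶ x₁) (g₂ : z ⟶ x₂) (c : F.obj z), F.map g₁ c = a₁ ∧ F.map g₂ c = a₂

theorem LiftsCospanEqualities.exists_span_of_eqvGen {F : C ⥤ Type*}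
    (hF : F.LiftsCospanEqualities) {p q : Σ z, F.obj z}
    (h : Relation.EqvGen F.ColimitTypeRel p q) :
    ∃ (z : C) (f : z ⟶ p.1) (g : z ⟶ q.1) (c : F.obj z), F.map f c = p.2 ∧ F.map g c = q.2 := by
  induction h with
  | rel p q hpq =>
    obtain ⟨f, hf⟩ := hpq
    exact ⟨p.1, 𝟙 _, f, p.2, by simp, hf.symm⟩
  | refl p => exact ⟨p.1, 𝟙 _, 𝟙 _, p.2, by simp, by simp⟩
  | symm p q _ ih =>
    obtain ⟨z, f, g, c, hf, hg⟩ := ih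
    exact ⟨z, g, f, c, hg, hf⟩
  | trans p q r _ _ ih₁ ih₂ =>
    obtain ⟨z, f, g, c, hf, hg⟩ := ih₁
    obtain ⟨z', f', g', c', hf', hg'⟩ := ih₂
    obtain ⟨u, h, h', d, hd, hd'⟩ := hF g f' c c' (hg.trans hf'.symm)
    exact ⟨u, h ≫ f, h' ≫ g', d, by simp [hd, hf], by simp [hd', hg']⟩

theorem liftsCospanEqualities_of_range_inter {F : C ⥤ Type*}
    (hinj : ∀ ⦃x y : C⦄ (f : x ⟶ y), Function.Injective (F.map f))
    (hcover : ∀ ⦃x₁ x₂ y : C⦄ (f₁ : x₁ ⟶ y) (f₂ : x₂ ⟶ y),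
      (Set.range (F.map f₁) ∩ Set.range (F.map f₂)).Nonempty →
      ∃ (n : ℕ) (w : Fin n → C) (g₁ : ∀ j, w j ⟶ x₁) (g₂ : ∀ j, w j ⟶ x₂),
        (∀ j, g₁ j ≫ f₁ = g₂ j ≫ f₂) ∧
        Set.range (F.map f₁) ∩ Set.range (F.map f₂) = ⋃ j, Set.range (F.map (g₁ j ≫ f₁))) :
    F.LiftsCospanEqualities := by
  intro x₁ x₂ y f₁ f₂ a₁ a₂ ha
  have hmem : F.map f₁ a₁ ∈ Set.range (F.map f₁) ∩ Set.range (F.map f₂) :=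
    ⟨⟨a₁, rfl⟩, ⟨a₂, ha.symm⟩⟩
  obtain ⟨n, w, g₁, g₂, hcomm, hrange⟩ := hcover f₁ f₂ ⟨_, hmem⟩
  obtain ⟨j, c, hc⟩ := Set.mem_iUnion.1 (hrange ▸ hmem)
  refine ⟨w j, g₁ j, g₂ j, c, hinj f₁ ?_, hinj f₂ ?_⟩
  · rw [← hc, Functor.map_comp_apply]
  · rw [← ha, ← hc, hcomm j, Functor.map_comp_apply]

end CategoryTheory.Functor

theorem TopCat.eqvGen_colimitTypeRel_of_colimit_ι_eq_s2 {J : Type u} [SmallCategory J]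
    (F : J ⥤ TopCat.{u}) {j j' : J} {x : F.obj j} {x' : F.obj j'}
    (h : colimit.ι F j x = colimit.ι F j' x') :
    Relation.EqvGen (F ⋙ forget TopCat).ColimitTypeRel ⟨j, x⟩ ⟨j', x'⟩ := by
  apply Types.colimit_eq
  rw [← ι_preservesColimitIso_hom (forget TopCat) F j,
    ← ι_preservesColimitIso_hom (forget TopCat) F j']
  simp only [types_comp_apply]
  exact congrArg _ h

theorem colimit_intersection_of_images_general {D : Type} [PartialOrder D]
    (I : D ⥤ TopCat.{0})
    (h2 : ∀ {x y : D} (f : x ⟶ y), Function.Injective (I.map f) ∧ IsClosedMap (I.map f))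
    (h3 : ∀ {x₁ x₂ y : D} (f₁ : x₁ ⟶ y) (f₂ : x₂ ⟶ y),
      (Set.range (I.map f₁) ∩ Set.range (I.map f₂)).Nonempty →
      ∃ (n : ℕ) (w : Fin n → D) (g₁ : ∀ j, w j ⟶ x₁) (g₂ : ∀ j, w j ⟶ x₂),
        (∀ j, g₁ j ≫ f₁ = g₂ j ≫ f₂) ∧
        Set.range (I.map f₁) ∩ Set.range (I.map f₂)
          = ⋃ j, Set.range (I.map (g₁ j ≫ f₁)))
    (x₁ x₂ : D)
    (n : ℕ) (w : Fin n → D)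
    (hw : ∀ z : D, (Nonempty (z ⟶ x₁) ∧ Nonempty (z ⟶ x₂)) ↔ ∃ j, w j = z)
    (g₁ : ∀ j, w j ⟶ x₁) :
    Set.range (colimit.ι I x₁ : I.obj x₁ ⟶ (colimit I : TopCat.{0})) ∩
      Set.range (colimit.ι I x₂ : I.obj x₂ ⟶ (colimit I : TopCat.{0}))
      = ⋃ j, Set.range ((colimit.ι I x₁ : I.obj x₁ ⟶ (colimit I : TopCat.{0})) ∘ I.map (g₁ j)) := by
  have hI : (I ⋙ forget TopCat).LiftsCospanEqualities :=
    Functor.liftsCospanEqualities_of_range_inter (fun _ _ f => (h2 f).1)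
      fun _ _ _ f₁ f₂ => h3 f₁ f₂
  ext p
  constructor
  · rintro ⟨⟨a, rfl⟩, ⟨b, hb⟩⟩
    obtain ⟨z, f, g, c, hc, -⟩ :=
      hI.exists_span_of_eqvGen (TopCat.eqvGen_colimitTypeRel_of_colimit_ι_eq_s2 I hb.symm)
    obtain ⟨j, rfl⟩ := (hw z).1 ⟨⟨f⟩, ⟨g⟩⟩
    refine Set.mem_iUnion.2 ⟨j, c, ?_⟩
    rw [← Subsingleton.elim f (g₁ j)]
    exact congrArg _ hc
  · rw [Set.mem_iUnion]
    rintro ⟨j, c, rfl⟩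
    obtain ⟨g₂⟩ := ((hw (w j)).2 ⟨j, rfl⟩).2
    exact ⟨⟨_, rfl⟩, ⟨I.map g₂ c, by simp⟩⟩

/-- under the hypotheses on the diagram `I`, if the images of `I(x₁)` and
`I(x₂)` in the colimit meet, and `w¹,…,wⁿ` enumerates exactly the objects admitting
morphisms to both `x₁` and `x₂` (with `g₁ʲ : wʲ ⟶ x₁` the unique such morphisms), then
the intersection of the images equals the union of the images of the `I(wʲ)`. -/
theorem colimit_intersection_of_images {D : Type} [PartialOrder D] [Fintype D]
    (I : D ⥤ TopCat.{0})
    (h1 : ∀ x : D, T1Space (I.obj x) ∧ NormalSpace (I.obj x))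
    (h2 : ∀ {x y : D} (f : x ⟶ y), Function.Injective (I.map f) ∧ IsClosedMap (I.map f))
    (h3 : ∀ {x₁ x₂ y : D} (f₁ : x₁ ⟶ y) (f₂ : x₂ ⟶ y),
      (Set.range (I.map f₁) ∩ Set.range (I.map f₂)).Nonempty →
      ∃ (n : ℕ) (w : Fin n → D) (g₁ : ∀ j, w j ⟶ x₁) (g₂ : ∀ j, w j ⟶ x₂),
        (∀ j, g₁ j ≫ f₁ = g₂ j ≫ f₂) ∧
        Set.range (I.map f₁) ∩ Set.range (I.map f₂)
          = ⋃ j, Set.range (I.map (g₁ j ≫ f₁)))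
    (x₁ x₂ : D)
    (hne : (Set.range (colimit.ι I x₁ : I.obj x₁ ⟶ (colimit I : TopCat.{0})) ∩
            Set.range (colimit.ι I x₂ : I.obj x₂ ⟶ (colimit I : TopCat.{0}))).Nonempty)
    (n : ℕ) (w : Fin n → D)
    (hw_inj : Function.Injective w)
    (hw : ∀ z : D, (Nonempty (z ⟶ x₁) ∧ Nonempty (z ⟶ x₂)) ↔ ∃ j, w j = z)
    (g₁ : ∀ j, w j ⟶ x₁) :
    Set.range (colimit.ι I x₁ : I.obj x₁ ⟶ (colimit I : TopCat.{0})) ∩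
      Set.range (colimit.ι I x₂ : I.obj x₂ ⟶ (colimit I : TopCat.{0}))
      = ⋃ j, Set.range ((colimit.ι I x₁ : I.obj x₁ ⟶ (colimit I : TopCat.{0})) ∘ I.map (g₁ j)) :=
  colimit_intersection_of_images_general I h2 h3 x₁ x₂ n w hw g₁
end

section
/- Let D be a finite poset (viewed as a category) and I : D → Top a functor such that: (i) for every object x, I(x) is a T1 normal topological space; (ii) for every morphism f of D, the continuous map I(f) is injective and closed; (iii) whenever f₁ : x₁ → y and f₂ : x₂ → y are morphisms of D with I(f₁)(I(x₁)) ∩ I(f₂)(I(x₂)) ≠ ∅, there exist finitely many objects w¹,…,wⁿ of D and morphisms g₁ʲ : wʲ → x₁, g₂ʲ : wʲ → x₂ with f₁∘g₁ʲ = f₂∘g₂ʲ for all j and I(f₁)(I(x₁)) ∩ I(f₂)(I(x₂)) = ⋃ⱼ I(f₁∘g₁ʲ)(I(wʲ)). Then the quotient map q : ⨆_{x∈D} I(x) → colim_D I is a closed map. -/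
/-!
Two points of `⨆ₓ I(x)` have the same image in the colimit exactly when they lie over a common
point of some `I(w)` along a span `x ← w → y`. Being related by a span is reflexive and symmetric;
for transitivity one has to turn a cospan `w → y ← w'` into a span, which is what hypothesis (iii)
does once the maps `I(f)` are injective. Consequently, for `A ⊆ I(x)` the trace of `q(A)` on `I(y)`
is the finite union of the sets `I(g)(I(f)⁻¹ A)` over spans `x ← w → y`, which is closed when `A`
is, and `q(C)` is the finite union of the closed sets `q(C ∩ I(x))`.
-/

universe u

open CategoryTheory Limits

section Spans

variable {D : Type*} [Category D] (I : D ⥤ TopCat)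

def SpanRel (p q : Σ x : D, I.obj x) : Prop :=
  ∃ (w : D) (f : w ⟶ p.1) (g : w ⟶ q.1) (r : I.obj w), I.map f r = p.2 ∧ I.map g r = q.2

def CospanRel (p q : Σ x : D, I.obj x) : Prop :=
  ∃ (y : D) (f : p.1 ⟶ y) (g : q.1 ⟶ y), I.map f p.2 = I.map g q.2

variable {I}

theorem cospanRel_le_spanRel
    (hinj : ∀ {x y : D} (f : x ⟶ y), Function.Injective (I.map f))
    (hcover : ∀ {x₁ x₂ y : D} (f₁ : x₁ ⟶ y) (f₂ : x₂ ⟶ y),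
      (Set.range (I.map f₁) ∩ Set.range (I.map f₂)).Nonempty →
      ∃ (n : ℕ) (w : Fin n → D) (g₁ : ∀ j, w j ⟶ x₁) (g₂ : ∀ j, w j ⟶ x₂),
        (∀ j, g₁ j ≫ f₁ = g₂ j ≫ f₂) ∧
        Set.range (I.map f₁) ∩ Set.range (I.map f₂)
          = ⋃ j, Set.range (I.map (g₁ j ≫ f₁))) :
    CospanRel I ≤ SpanRel I := by
  rintro ⟨x₁, a₁⟩ ⟨x₂, a₂⟩ ⟨y, f₁, f₂, hf⟩
  have hmem : I.map f₁ a₁ ∈ Set.range (I.map f₁) ∩ Set.range (I.map f₂) :=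
    ⟨⟨a₁, rfl⟩, ⟨a₂, hf.symm⟩⟩
  obtain ⟨n, w, g₁, g₂, hcomm, hinter⟩ := hcover f₁ f₂ ⟨_, hmem⟩
  rw [hinter] at hmem
  obtain ⟨j, r, hr⟩ := Set.mem_iUnion.1 hmem
  refine ⟨w j, g₁ j, g₂ j, r, hinj f₁ ?_, hinj f₂ ?_⟩
  · rwa [← ConcreteCategory.comp_apply, ← I.map_comp]
  · rwa [← ConcreteCategory.comp_apply, ← I.map_comp, ← hcomm j, ← hf]

theorem SpanRel.refl (p : Σ x : D, I.obj x) : SpanRel I p p :=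
  ⟨p.1, 𝟙 p.1, 𝟙 p.1, p.2, by simp, by simp⟩

theorem SpanRel.symm {p q : Σ x : D, I.obj x} : SpanRel I p q → SpanRel I q p :=
  fun ⟨w, f, g, r, hf, hg⟩ => ⟨w, g, f, r, hg, hf⟩

theorem SpanRel.trans (hjoin : CospanRel I ≤ SpanRel I) {p q s : Σ x : D, I.obj x}
    (hpq : SpanRel I p q) (hqs : SpanRel I q s) : SpanRel I p s := by
  obtain ⟨w, f, g, r, hf, hg⟩ := hpq
  obtain ⟨w', f', g', r', hf', hg'⟩ := hqs
  obtain ⟨v, h, h', t, ht, ht'⟩ := hjoin ⟨w, r⟩ ⟨w', r'⟩ ⟨q.1, g, f', hg.trans hf'.symm⟩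
  refine ⟨v, h ≫ f, h' ≫ g', t, ?_, ?_⟩
  · rw [I.map_comp, ConcreteCategory.comp_apply, ht, hf]
  · rw [I.map_comp, ConcreteCategory.comp_apply, ht', hg']

theorem equivalence_spanRel (hjoin : CospanRel I ≤ SpanRel I) : Equivalence (SpanRel I) :=
  ⟨SpanRel.refl, SpanRel.symm, SpanRel.trans hjoin⟩

end Spans

section Colimit

variable {D : Type u} [SmallCategory D] {I : D ⥤ TopCat.{u}}

theorem spanRel_of_ι_eq (hjoin : CospanRel I ≤ SpanRel I) {x y : D} {a : I.obj x} {b : I.obj y}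
    (h : colimit.ι I x a = colimit.ι I y b) : SpanRel I ⟨x, a⟩ ⟨y, b⟩ := by
  have hforget : colimit.ι (I ⋙ forget TopCat) x a = colimit.ι (I ⋙ forget TopCat) y b := by
    have hx := ConcreteCategory.congr_hom (ι_preservesColimitIso_inv (forget TopCat) I x) a
    have hy := ConcreteCategory.congr_hom (ι_preservesColimitIso_inv (forget TopCat) I y) b
    simp only [ConcreteCategory.comp_apply] at hx hy
    apply (mono_iff_injective (preservesColimitIso (forget TopCat) I).inv).1 inferInstance
    rw [hx, hy]
    exact h
  have hrel : (I ⋙ forget TopCat).ColimitTypeRel ≤ SpanRel I :=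
    fun p _ ⟨f, hf⟩ => ⟨p.1, 𝟙 p.1, f, p.2, by simp, hf.symm⟩
  exact (equivalence_spanRel hjoin).eqvGen_iff.1
    (Relation.EqvGen.mono hrel _ _ (Types.colimit_eq hforget))

theorem preimage_ι_image_ι (hjoin : CospanRel I ≤ SpanRel I) {x : D} (A : Set (I.obj x))
    (y : D) :
    colimit.ι I y ⁻¹' (colimit.ι I x '' A) =
      ⋃ (w : D) (f : w ⟶ x) (g : w ⟶ y), I.map g '' (I.map f ⁻¹' A) := by
  ext b
  simp only [Set.mem_preimage, Set.mem_image, Set.mem_iUnion]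
  constructor
  · rintro ⟨a, ha, hab⟩
    obtain ⟨w, f, g, r, hf, hg⟩ := spanRel_of_ι_eq hjoin hab
    exact ⟨w, f, g, r, hf ▸ ha, hg⟩
  · rintro ⟨w, f, g, r, hr, rfl⟩
    exact ⟨I.map f r, hr, by rw [colimit.w_apply, colimit.w_apply]⟩

theorem isClosedMap_colimit_ι [FinCategory D] (hjoin : CospanRel I ≤ SpanRel I)
    (hclosed : ∀ {x y : D} (f : x ⟶ y), IsClosedMap (I.map f)) (x : D) :
    IsClosedMap (colimit.ι I x) := by
  intro A hA
  refine (TopCat.isClosed_iff_of_isColimit _ (colimit.isColimit I) _).2 fun y => ?_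
  rw [colimit.cocone_ι, preimage_ι_image_ι hjoin]
  exact isClosed_iUnion_of_finite fun w => isClosed_iUnion_of_finite fun f =>
    isClosed_iUnion_of_finite fun g => hclosed g _ (hA.preimage (I.map f).hom.continuous)

end Colimit

theorem isClosedMap_sigma_of_finite {ι X : Type*} [Finite ι] {σ : ι → Type*}
    [∀ i, TopologicalSpace (σ i)] [TopologicalSpace X] {f : Sigma σ → X}
    (hf : ∀ i, IsClosedMap fun a => f ⟨i, a⟩) : IsClosedMap f := by
  intro C hC
  rw [← Set.iUnion_image_preimage_sigma_mk_eq_self C, Set.image_iUnion]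
  exact isClosed_iUnion_of_finite fun i => by
    rw [← Set.image_comp]
    exact hf i _ (hC.preimage continuous_sigmaMk)

theorem colimit_quotient_map_closed_general {D : Type} [PartialOrder D] [Fintype D]
    (I : D ⥤ TopCat.{0})
    (h2 : ∀ {x y : D} (f : x ⟶ y), Function.Injective (I.map f) ∧ IsClosedMap (I.map f))
    (h3 : ∀ {x₁ x₂ y : D} (f₁ : x₁ ⟶ y) (f₂ : x₂ ⟶ y),
      (Set.range (I.map f₁) ∩ Set.range (I.map f₂)).Nonempty →
      ∃ (n : ℕ) (w : Fin n → D) (g₁ : ∀ j, w j ⟶ x₁) (g₂ : ∀ j, w j ⟶ x₂),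
        (∀ j, g₁ j ≫ f₁ = g₂ j ≫ f₂) ∧
        Set.range (I.map f₁) ∩ Set.range (I.map f₂)
          = ⋃ j, Set.range (I.map (g₁ j ≫ f₁))) :
    IsClosedMap (fun p : Σ x : D, (I.obj x : Type) =>
      (colimit.ι I p.1 : I.obj p.1 ⟶ (colimit I : TopCat.{0})) p.2) :=
  isClosedMap_sigma_of_finite <| isClosedMap_colimit_ι
    (cospanRel_le_spanRel (fun f => (h2 f).1) h3) (fun f => (h2 f).2)

/-- under the hypotheses on the diagram `I`, the quotient map
`q : ⨆ₓ I(x) → colim_D I` from the disjoint union (sigma type) to the colimit is a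
closed map. -/
theorem colimit_quotient_map_closed {D : Type} [PartialOrder D] [Fintype D]
    (I : D ⥤ TopCat.{0})
    (h1 : ∀ x : D, T1Space (I.obj x) ∧ NormalSpace (I.obj x))
    (h2 : ∀ {x y : D} (f : x ⟶ y), Function.Injective (I.map f) ∧ IsClosedMap (I.map f))
    (h3 : ∀ {x₁ x₂ y : D} (f₁ : x₁ ⟶ y) (f₂ : x₂ ⟶ y),
      (Set.range (I.map f₁) ∩ Set.range (I.map f₂)).Nonempty →
      ∃ (n : ℕ) (w : Fin n → D) (g₁ : ∀ j, w j ⟶ x₁) (g₂ : ∀ j, w j ⟶ x₂),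
        (∀ j, g₁ j ≫ f₁ = g₂ j ≫ f₂) ∧
        Set.range (I.map f₁) ∩ Set.range (I.map f₂)
          = ⋃ j, Set.range (I.map (g₁ j ≫ f₁))) :
    IsClosedMap (fun p : Σ x : D, (I.obj x : Type) =>
      (colimit.ι I p.1 : I.obj p.1 ⟶ (colimit I : TopCat.{0})) p.2) :=
  colimit_quotient_map_closed_general I h2 h3
end

section
/- Let D be a finite poset (viewed as a category) and I : D → Top a functor such that: (i) for every object x, I(x) is a T1 normal topological space; (ii) for every morphism f of D, the continuous map I(f) is injective and closed; (iii) whenever f₁ : x₁ → y and f₂ : x₂ → y are morphisms of D with I(f₁)(I(x₁)) ∩ I(f₂)(I(x₂)) ≠ ∅, there exist finitely many objects w¹,…,wⁿ of D and morphisms g₁ʲ : wʲ → x₁, g₂ʲ : wʲ → x₂ with f₁∘g₁ʲ = f₂∘g₂ʲ for all j and I(f₁)(I(x₁)) ∩ I(f₂)(I(x₂)) = ⋃ⱼ I(f₁∘g₁ʲ)(I(wʲ)). Then for objects x, y of D and points a ∈ I(x), b ∈ I(y), the images of a and b in colim_D I coincide if and only if there exist an object z of D, a point p ∈ I(z), and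 morphisms f : z → x and g : z → y with I(f)(p) = a and I(g)(p) = b. -/
/-!
Points `a ∈ I(x)` and `b ∈ I(y)` are identified in the colimit exactly when they are related by
the equivalence relation generated by `p ∼ I(f)(p)`. The relation "`a` and `b` are images of a
common point" contains the generating relation and is contained in the generated one, so it
suffices to see that it is transitive. If `a, b` come from `s₁` and `b, c` from `s₂`, then `s₁`
and `s₂` have the same image `b`; by (iii) this point lies in the image of some `I(wʲ)` along a
commuting square, and injectivity of the two legs makes the preimage of `b` in `I(wʲ)` a common
preimage of `s₁` and `s₂`, hence of `a` and `c`.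
-/

open CategoryTheory Limits

universe u

namespace CategoryTheory.Functor

variable {C : Type*} [Category C] {F : C ⥤ Type*}

variable (F) in
def CommonPreimage (p q : Σ j, F.obj j) : Prop :=
  ∃ (k : C) (s : F.obj k) (f : k ⟶ p.1) (g : k ⟶ q.1), F.map f s = p.2 ∧ F.map g s = q.2

lemma CommonPreimage.of_colimitTypeRel {p q : Σ j, F.obj j} (h : F.ColimitTypeRel p q) :
    F.CommonPreimage p q :=
  let ⟨f, hf⟩ := h
  ⟨p.1, p.2, 𝟙 p.1, f, by simp, hf.symm⟩

lemma CommonPreimage.eqvGen {p q : Σ j, F.obj j} (h : F.CommonPreimage p q) :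
    Relation.EqvGen F.ColimitTypeRel p q :=
  let ⟨k, s, f, g, hf, hg⟩ := h
  .trans _ ⟨k, s⟩ _ (.symm _ _ (.rel _ _ ⟨f, hf.symm⟩)) (.rel _ _ ⟨g, hg.symm⟩)

lemma commonPreimage_equivalence
    (hF : ∀ {x₁ x₂ y : C} (f₁ : x₁ ⟶ y) (f₂ : x₂ ⟶ y) (u : F.obj x₁) (v : F.obj x₂),
      F.map f₁ u = F.map f₂ v → F.CommonPreimage ⟨x₁, u⟩ ⟨x₂, v⟩) :
    _root_.Equivalence F.CommonPreimage where
  refl p := ⟨p.1, p.2, 𝟙 p.1, 𝟙 p.1, by simp, by simp⟩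
  symm := fun ⟨k, s, f, g, hf, hg⟩ ↦ ⟨k, s, g, f, hg, hf⟩
  trans := by
    rintro p q r ⟨k₁, s₁, f₁, g₁, hf₁, hg₁⟩ ⟨k₂, s₂, f₂, g₂, hf₂, hg₂⟩
    obtain ⟨k, s, a₁, a₂, ha₁, ha₂⟩ := hF g₁ f₂ s₁ s₂ (hg₁.trans hf₂.symm)
    refine ⟨k, s, a₁ ≫ f₁, a₂ ≫ g₂, ?_, ?_⟩
    · simp [ha₁, hf₁]
    · simp [ha₂, hg₂]

lemma eqvGen_colimitTypeRel_iff_commonPreimage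
    (hF : ∀ {x₁ x₂ y : C} (f₁ : x₁ ⟶ y) (f₂ : x₂ ⟶ y) (u : F.obj x₁) (v : F.obj x₂),
      F.map f₁ u = F.map f₂ v → F.CommonPreimage ⟨x₁, u⟩ ⟨x₂, v⟩) {p q : Σ j, F.obj j} :
    Relation.EqvGen F.ColimitTypeRel p q ↔ F.CommonPreimage p q :=
  ⟨fun h ↦ (commonPreimage_equivalence hF).eqvGen_iff.mp (h.mono fun _ _ ↦ .of_colimitTypeRel),
    CommonPreimage.eqvGen⟩

lemma commonPreimage_of_map_eq_map
    (hinj : ∀ {x y : C} (f : x ⟶ y), Function.Injective (F.map f))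
    (hcover : ∀ {x₁ x₂ y : C} (f₁ : x₁ ⟶ y) (f₂ : x₂ ⟶ y),
      (Set.range (F.map f₁) ∩ Set.range (F.map f₂)).Nonempty →
      ∃ (ι : Type*) (w : ι → C) (g₁ : ∀ j, w j ⟶ x₁) (g₂ : ∀ j, w j ⟶ x₂),
        (∀ j, g₁ j ≫ f₁ = g₂ j ≫ f₂) ∧
        Set.range (F.map f₁) ∩ Set.range (F.map f₂) ⊆ ⋃ j, Set.range (F.map (g₁ j ≫ f₁)))
    {x₁ x₂ y : C} (f₁ : x₁ ⟶ y) (f₂ : x₂ ⟶ y) (u : F.obj x₁) (v : F.obj x₂)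
    (huv : F.map f₁ u = F.map f₂ v) : F.CommonPreimage ⟨x₁, u⟩ ⟨x₂, v⟩ := by
  have hmem : F.map f₁ u ∈ Set.range (F.map f₁) ∩ Set.range (F.map f₂) :=
    ⟨⟨u, rfl⟩, ⟨v, huv.symm⟩⟩
  obtain ⟨ι, w, g₁, g₂, hcomm, hsub⟩ := hcover f₁ f₂ ⟨_, hmem⟩
  obtain ⟨_, ⟨j, rfl⟩, s, hs⟩ := hsub hmem
  refine ⟨w j, s, g₁ j, g₂ j, hinj f₁ ?_, hinj f₂ ?_⟩
  · simpa using hs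
  · simpa [← huv, hcomm j] using hs

end CategoryTheory.Functor

lemma CategoryTheory.Limits.Types.colimit_ι_eq_iff {J : Type*} [Category J] (F : J ⥤ Type*)
    [HasColimit F] {j j' : J} {x : F.obj j} {x' : F.obj j'} :
    colimit.ι F j x = colimit.ι F j' x' ↔ Relation.EqvGen F.ColimitTypeRel ⟨j, x⟩ ⟨j', x'⟩ := by
  rw [← (Types.colimitEquivColimitType F).injective.eq_iff, Types.colimitEquivColimitType_apply,
    Types.colimitEquivColimitType_apply]
  exact Quot.eq

lemma TopCat.colimit_ι_eq_iff {J : Type u} [SmallCategory J] (F : J ⥤ TopCat.{u}) {j j' : J}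
    {x : F.obj j} {x' : F.obj j'} :
    colimit.ι F j x = colimit.ι F j' x' ↔
      Relation.EqvGen (F ⋙ forget TopCat).ColimitTypeRel ⟨j, x⟩ ⟨j', x'⟩ := by
  rw [← Types.colimit_ι_eq_iff, ← ι_preservesColimitIso_hom (forget TopCat) F j,
    ← ι_preservesColimitIso_hom (forget TopCat) F j']
  exact (preservesColimitIso (forget TopCat) F).toEquiv.injective.eq_iff.symm

theorem colimit_eq_iff_common_preimage_general {D : Type} [PartialOrder D]
    (I : D ⥤ TopCat.{0})
    (h2 : ∀ {x y : D} (f : x ⟶ y), Function.Injective (I.map f) ∧ IsClosedMap (I.map f))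
    (h3 : ∀ {x₁ x₂ y : D} (f₁ : x₁ ⟶ y) (f₂ : x₂ ⟶ y),
      (Set.range (I.map f₁) ∩ Set.range (I.map f₂)).Nonempty →
      ∃ (n : ℕ) (w : Fin n → D) (g₁ : ∀ j, w j ⟶ x₁) (g₂ : ∀ j, w j ⟶ x₂),
        (∀ j, g₁ j ≫ f₁ = g₂ j ≫ f₂) ∧
        Set.range (I.map f₁) ∩ Set.range (I.map f₂)
          = ⋃ j, Set.range (I.map (g₁ j ≫ f₁))) :
    ∀ (x y : D) (a : I.obj x) (b : I.obj y),
      (colimit.ι I x : I.obj x ⟶ (colimit I : TopCat.{0})) a =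
        (colimit.ι I y : I.obj y ⟶ (colimit I : TopCat.{0})) b ↔
      ∃ (z : D) (p : I.obj z) (f : z ⟶ x) (g : z ⟶ y),
        I.map f p = a ∧ I.map g p = b := by
  intro x y a b
  rw [TopCat.colimit_ι_eq_iff, Functor.eqvGen_colimitTypeRel_iff_commonPreimage
    (Functor.commonPreimage_of_map_eq_map (F := I ⋙ forget TopCat) (fun f ↦ (h2 f).1)
      fun f₁ f₂ hne ↦ by
        obtain ⟨n, w, g₁, g₂, hcomm, hrange⟩ := h3 f₁ f₂ hne
        exact ⟨Fin n, w, g₁, g₂, hcomm, hrange.subset⟩)]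
  rfl

/-- under the hypotheses on the diagram `I`, two points `a ∈ I(x)`,
`b ∈ I(y)` have the same image in the colimit iff they have a common preimage
`p ∈ I(z)` along morphisms `f : z ⟶ x`, `g : z ⟶ y`. -/
theorem colimit_eq_iff_common_preimage {D : Type} [PartialOrder D] [Fintype D]
    (I : D ⥤ TopCat.{0})
    (h1 : ∀ x : D, T1Space (I.obj x) ∧ NormalSpace (I.obj x))
    (h2 : ∀ {x y : D} (f : x ⟶ y), Function.Injective (I.map f) ∧ IsClosedMap (I.map f))
    (h3 : ∀ {x₁ x₂ y : D} (f₁ : x₁ ⟶ y) (f₂ : x₂ ⟶ y),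
      (Set.range (I.map f₁) ∩ Set.range (I.map f₂)).Nonempty →
      ∃ (n : ℕ) (w : Fin n → D) (g₁ : ∀ j, w j ⟶ x₁) (g₂ : ∀ j, w j ⟶ x₂),
        (∀ j, g₁ j ≫ f₁ = g₂ j ≫ f₂) ∧
        Set.range (I.map f₁) ∩ Set.range (I.map f₂)
          = ⋃ j, Set.range (I.map (g₁ j ≫ f₁))) :
    ∀ (x y : D) (a : I.obj x) (b : I.obj y),
      (colimit.ι I x : I.obj x ⟶ (colimit I : TopCat.{0})) a =
        (colimit.ι I y : I.obj y ⟶ (colimit I : TopCat.{0})) b ↔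
      ∃ (z : D) (p : I.obj z) (f : z ⟶ x) (g : z ⟶ y),
        I.map f p = a ∧ I.map g p = b :=
  colimit_eq_iff_common_preimage_general I h2 h3
end
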